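/- Let A = α + b + c + β e₁₂₃ be a general element of Cl(3,0), where b is a vector and c a bivector. If A² = -1 and α ≠ 0, then a contradiction follows; i.e., every square root of -1 in Cl(3,0) has zero scalar part. -/

import Mathlib

/-!
The Pauli matrices give a representation of Cl(3,0) on `ℂ²`. The Pauli matrices and their
pairwise products are traceless while `e₁e₂e₃` acts as `i`, so the scalar part of `A` is
`Re (tr A) / 2`. A `2 × 2` matrix `M` with `M² = -1` has eigenvalues `±i`, hence its trace
is `0` or `±2i`, which has real part `0`.
-/

noncomputable def Q : QuadraticForm ℝ (Fin 3 → ℝ) :=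
  QuadraticMap.weightedSumSquares ℝ ![(1 : ℝ), 1, 1]

noncomputable def e (i : Fin 3) : CliffordAlgebra Q :=
  CliffordAlgebra.ι Q (Pi.single i 1)

open Complex Matrix

theorem Matrix.trace_mul_trace_sq_add_four_eq_zero {R : Type*} [CommRing R]
    {M : Matrix (Fin 2) (Fin 2) R} (h : M * M = -1) : trace M * (trace M ^ 2 + 4) = 0 := by
  have h00 : M 0 0 * M 0 0 + M 0 1 * M 1 0 = -1 := by simpa [mul_apply] using congr_fun₂ h 0 0
  have h01 : M 0 0 * M 0 1 + M 0 1 * M 1 1 = 0 := by simpa [mul_apply] using congr_fun₂ h 0 1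
  have h10 : M 1 0 * M 0 0 + M 1 1 * M 1 0 = 0 := by simpa [mul_apply] using congr_fun₂ h 1 0
  have h11 : M 1 0 * M 0 1 + M 1 1 * M 1 1 = -1 := by simpa [mul_apply] using congr_fun₂ h 1 1
  rw [trace_fin_two]
  linear_combination (M 0 0 + 3 * M 1 1) * h00 + (3 * M 0 0 + M 1 1) * h11
    - 2 * M 1 0 * h01 - 2 * M 0 1 * h10

theorem Complex.re_eq_zero_of_mul_sq_add_four_eq_zero {z : ℂ} (h : z * (z ^ 2 + 4) = 0) :
    z.re = 0 := by
  rcases mul_eq_zero.mp h with rfl | h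
  · rfl
  · have : z ^ 2 = (2 * I) ^ 2 := by linear_combination h - 4 * I_sq
    rcases sq_eq_sq_iff_eq_or_eq_neg.mp this with rfl | rfl <;> simp

noncomputable def pauli : Fin 3 → Matrix (Fin 2) (Fin 2) ℂ
  | 0 => !![0, 1; 1, 0]
  | 1 => !![0, -I; I, 0]
  | 2 => !![1, 0; 0, -1]

theorem pauli_linearCombination_mul_self (v : Fin 3 → ℝ) :
    Fintype.linearCombination ℝ pauli v * Fintype.linearCombination ℝ pauli v =
      algebraMap ℝ _ (Q v) := by
  rw [Algebra.algebraMap_eq_smul_one]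
  ext i j
  fin_cases i <;> fin_cases j <;>
    simp [Fintype.linearCombination_apply, Fin.sum_univ_three, pauli, Q,
      QuadraticMap.weightedSumSquares_apply, Complex.ext_iff] <;>
    grind

noncomputable def pauliRep : CliffordAlgebra Q →ₐ[ℝ] Matrix (Fin 2) (Fin 2) ℂ :=
  CliffordAlgebra.lift Q ⟨Fintype.linearCombination ℝ pauli, pauli_linearCombination_mul_self⟩

theorem pauliRep_e (i : Fin 3) : pauliRep (e i) = pauli i := by
  simp [pauliRep, e, Fintype.linearCombination_apply, Pi.single_apply]

theorem trace_pauliRep (α b₁ b₂ b₃ c₁ c₂ c₃ β : ℝ) :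
    trace (pauliRep (algebraMap ℝ (CliffordAlgebra Q) α
        + b₁ • e 0 + b₂ • e 1 + b₃ • e 2
        + c₁ • (e 1 * e 2) + c₂ • (e 2 * e 0) + c₃ • (e 0 * e 1)
        + β • (e 0 * e 1 * e 2))) = 2 * (α + β * I) := by
  simp only [map_add, map_smul, map_mul, AlgHom.commutes, pauliRep_e, trace_add, trace_smul]
  simp [pauli, trace_fin_two, algebraMap_matrix_apply]
  ring

/-- Every square root of `-1` in Cl(3,0) has zero scalar part: if
`A = α + b + c + β e₁₂₃` satisfies `A² = -1` then `α = 0`. -/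
theorem sqrt_neg_one_scalar_part_Cl_3_0
    (α b₁ b₂ b₃ c₁ c₂ c₃ β : ℝ)
    (A : CliffordAlgebra Q)
    (hA : A = algebraMap ℝ (CliffordAlgebra Q) α
        + b₁ • e 0 + b₂ • e 1 + b₃ • e 2
        + c₁ • (e 1 * e 2) + c₂ • (e 2 * e 0) + c₃ • (e 0 * e 1)
        + β • (e 0 * e 1 * e 2))
    (h : A * A = -1) : α = 0 := by
  have hsq : pauliRep A * pauliRep A = -1 := by rw [← map_mul, h, map_neg, map_one]
  have hre := re_eq_zero_of_mul_sq_add_four_eq_zero (trace_mul_trace_sq_add_four_eq_zero hsq)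
  rw [hA, trace_pauliRep] at hre
  simpa using hre
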